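/- Let U be a real normed linear space and let a be a fixed integer with |a| ≠ 1. Then the norm of U arises from an inner product (i.e. there exists an inner product ⟨·,·⟩ on U with ⟨x,x⟩ = ‖x‖² for all x ∈ U) if and only if ‖ax+y‖² + ‖x+ay‖² + (a−1)‖x−y‖² = (a+1)‖x+y‖² + (a²−1)(‖x‖² + ‖y‖²) for all x, y ∈ U. -/

import Mathlib

/-!
Write `D(x, y) = ‖x + y‖² + ‖x - y‖² - 2(‖x‖² + ‖y‖²)` for the parallelogram defect; by
Jordan–von Neumann the norm comes from an inner product iff `D = 0`, and in an inner product
space the identity is a direct expansion. Conversely, combining the identity at `(x, c y)`,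
`(c x, y)`, `(x, y)` and `(x, -y)` gives the identity for `c²` up to the error term `-(c² - 1) D`.
Substituting `(x + y, x - y)` turns this into the scaling law
`D((c² + 1) x, (c² - 1) y) = (c² - 1)(c² + 3) D(x, y)`. Applying it to `((c² - 1) x, (c² + 1) y)`
and using `D(t x, t y) = t² D(x, y)` and `D(x, y) = D(y, x)` yields
`(c⁴ - 1)² D = (c² - 1)² (c² + 3)² D`, and the two coefficients differ when `c² ≠ 1`.
-/

section ParallelogramLaw

variable {U : Type*} [NormedAddCommGroup U]

def parallelogramDefect (x y : U) : ℝ :=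
  ‖x + y‖ ^ 2 + ‖x - y‖ ^ 2 - 2 * (‖x‖ ^ 2 + ‖y‖ ^ 2)

lemma parallelogramDefect_comm (x y : U) : parallelogramDefect x y = parallelogramDefect y x := by
  simp only [parallelogramDefect, add_comm x y, norm_sub_rev x y]
  ring

lemma innerProductSpaceable_of_parallelogramDefect_eq_zero
    (h : ∀ x y : U, parallelogramDefect x y = 0) : InnerProductSpaceable U :=
  ⟨fun x y => by
    have hxy := h x y
    rw [parallelogramDefect] at hxy
    linear_combination hxy⟩

variable [NormedSpace ℝ U]

variable (U) in
/-- At `c = 0` this is the parallelogram law. -/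
def ParallelogramLawWith (c : ℝ) : Prop :=
  ∀ x y : U, ‖c • x + y‖ ^ 2 + ‖x + c • y‖ ^ 2 + (c - 1) * ‖x - y‖ ^ 2
    = (c + 1) * ‖x + y‖ ^ 2 + (c ^ 2 - 1) * (‖x‖ ^ 2 + ‖y‖ ^ 2)

lemma norm_smul_sq (t : ℝ) (v : U) : ‖t • v‖ ^ 2 = t ^ 2 * ‖v‖ ^ 2 := by
  rw [norm_smul, Real.norm_eq_abs, mul_pow, sq_abs]

lemma parallelogramDefect_smul_smul (t : ℝ) (x y : U) :
    parallelogramDefect (t • x) (t • y) = t ^ 2 * parallelogramDefect x y := by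
  simp only [parallelogramDefect, ← smul_add, ← smul_sub, norm_smul_sq]
  ring

namespace ParallelogramLawWith

variable {c : ℝ}

lemma sq (h : ParallelogramLawWith U c) (x y : U) :
    ‖c ^ 2 • x + y‖ ^ 2 + ‖x + c ^ 2 • y‖ ^ 2 + (c ^ 2 - 1) * ‖x - y‖ ^ 2
      = (c ^ 2 + 1) * ‖x + y‖ ^ 2 + ((c ^ 2) ^ 2 - 1) * (‖x‖ ^ 2 + ‖y‖ ^ 2)
        - (c ^ 2 - 1) * parallelogramDefect x y := by
  have e1 := h x (c • y)
  have e2 := h (c • x) y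
  have e3 := h x (-y)
  rw [← smul_add, smul_smul, ← pow_two] at e1 e2
  simp only [norm_smul_sq] at e1 e2
  simp only [smul_neg, ← sub_eq_add_neg, sub_neg_eq_add, norm_neg] at e3
  unfold parallelogramDefect
  linear_combination e1 + e2 + (c + 1) * h x y - (c - 1) * e3

lemma parallelogramDefect_smul_add_smul (h : ParallelogramLawWith U c) (x y : U) :
    parallelogramDefect ((c ^ 2 + 1) • x) ((c ^ 2 - 1) • y)
      = (c ^ 2 - 1) * (c ^ 2 + 3) * parallelogramDefect x y := by
  have e := h.sq (x + y) (x - y)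
  rw [parallelogramDefect,
    show c ^ 2 • (x + y) + (x - y) = (c ^ 2 + 1) • x + (c ^ 2 - 1) • y by module,
    show x + y + c ^ 2 • (x - y) = (c ^ 2 + 1) • x - (c ^ 2 - 1) • y by module,
    show x + y + (x - y) = (2 : ℝ) • x by module,
    show x + y - (x - y) = (2 : ℝ) • y by module] at e
  simp only [parallelogramDefect, norm_smul_sq] at e ⊢
  linear_combination e

lemma parallelogramDefect_eq_zero (h : ParallelogramLawWith U c) (hc : c ^ 2 ≠ 1) (x y : U) :
    parallelogramDefect x y = 0 := by
  have key := h.parallelogramDefect_smul_add_smul ((c ^ 2 - 1) • x) ((c ^ 2 + 1) • y)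
  have lhs : parallelogramDefect ((c ^ 2 + 1) • (c ^ 2 - 1) • x) ((c ^ 2 - 1) • (c ^ 2 + 1) • y)
      = ((c ^ 2 + 1) * (c ^ 2 - 1)) ^ 2 * parallelogramDefect x y := by
    rw [smul_smul, smul_smul, mul_comm (c ^ 2 - 1), parallelogramDefect_smul_smul]
  have rhs : parallelogramDefect ((c ^ 2 - 1) • x) ((c ^ 2 + 1) • y)
      = (c ^ 2 - 1) * (c ^ 2 + 3) * parallelogramDefect x y := by
    rw [parallelogramDefect_comm, h.parallelogramDefect_smul_add_smul, parallelogramDefect_comm]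
  rw [lhs, rhs] at key
  have hne : (c ^ 2 - 1) ^ 2 * (c ^ 2 + 2) ≠ 0 :=
    mul_ne_zero (pow_ne_zero _ (sub_ne_zero.mpr hc)) (by positivity)
  refine (mul_eq_zero.mp ?_).resolve_left hne
  linear_combination -key / 4

end ParallelogramLawWith

lemma InnerProductSpace.parallelogramLawWith {E : Type*} [NormedAddCommGroup E]
    [InnerProductSpace ℝ E] (c : ℝ) : ParallelogramLawWith E c := by
  intro x y
  simp only [norm_add_sq_real, norm_sub_sq_real, norm_smul_sq, real_inner_smul_left,
    real_inner_smul_right]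
  ring

lemma parallelogramLawWith_iff_innerProductSpaceable {c : ℝ} (hc : c ^ 2 ≠ 1) :
    ParallelogramLawWith U c ↔ InnerProductSpaceable U := by
  refine ⟨fun h => innerProductSpaceable_of_parallelogramDefect_eq_zero
    (h.parallelogramDefect_eq_zero hc), fun hU => ?_⟩
  let : InnerProductSpace ℝ U := .ofNorm ℝ hU.parallelogram_identity
  exact InnerProductSpace.parallelogramLawWith c

lemma exists_inner_iff_innerProductSpaceable :
    (∃ inner : U → U → ℝ,
      (∀ x y : U, inner x y = inner y x) ∧
      (∀ x y z : U, inner (x + y) z = inner x z + inner y z) ∧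
      (∀ (c : ℝ) (x y : U), inner (c • x) y = c * inner x y) ∧
      (∀ x : U, x ≠ 0 → 0 < inner x x) ∧
      (∀ x : U, inner x x = ‖x‖ ^ 2)) ↔ InnerProductSpaceable U := by
  constructor
  · rintro ⟨ip, symm, add_left, smul_left, -, norm_sq⟩
    let : InnerProductSpace ℝ U :=
      { inner := ip
        norm_sq_eq_re_inner := fun x => (norm_sq x).symm
        conj_inner_symm := fun x y => symm y x
        add_left := add_left
        smul_left := fun x y r => smul_left r x y }
    infer_instance
  · intro hU
    let : InnerProductSpace ℝ U := .ofNorm ℝ hU.parallelogram_identity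
    exact ⟨fun x y => inner ℝ x y, fun x y => real_inner_comm y x, inner_add_left,
      fun c x y => real_inner_smul_left x y c,
      fun x hx => real_inner_self_pos.mpr hx, real_inner_self_eq_norm_sq⟩

end ParallelogramLaw

/-- For a real normed space `U` and a fixed integer `a` with `|a| ≠ 1`:
the norm of `U` arises from an inner product iff
`‖ax+y‖² + ‖x+ay‖² + (a−1)‖x−y‖² = (a+1)‖x+y‖² + (a²−1)(‖x‖²+‖y‖²)` for all `x, y`. -/
theorem stmt_5 {U : Type*} [NormedAddCommGroup U] [NormedSpace ℝ U]
    (a : ℤ) (ha : |a| ≠ 1) :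
    (∃ inner : U → U → ℝ,
      (∀ x y : U, inner x y = inner y x) ∧
      (∀ x y z : U, inner (x + y) z = inner x z + inner y z) ∧
      (∀ (c : ℝ) (x y : U), inner (c • x) y = c * inner x y) ∧
      (∀ x : U, x ≠ 0 → 0 < inner x x) ∧
      (∀ x : U, inner x x = ‖x‖ ^ 2)) ↔
    (∀ x y : U,
      ‖a • x + y‖ ^ 2 + ‖x + a • y‖ ^ 2 + ((a : ℝ) - 1) * ‖x - y‖ ^ 2
        = ((a : ℝ) + 1) * ‖x + y‖ ^ 2 + ((a : ℝ) ^ 2 - 1) * (‖x‖ ^ 2 + ‖y‖ ^ 2)) := by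
  have hc : (a : ℝ) ^ 2 ≠ 1 := by
    rw [← one_pow 2, Ne, sq_eq_sq_iff_abs_eq_abs, abs_one, ← Int.cast_abs]
    exact_mod_cast ha
  rw [exists_inner_iff_innerProductSpaceable, ← parallelogramLawWith_iff_innerProductSpaceable hc]
  simp only [ParallelogramLawWith, Int.cast_smul_eq_zsmul]
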